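/- For b ∈ (-1,1) and r ∈ (0,1), the image under Re of the closed hyperbolic disc in the strip S with hyperbolic center b and hyperbolic radius λ(r) = ln((1+r)/(1-r)) is exactly the interval [(4/π)arctan((a-r)/(1-ar)), (4/π)arctan((a+r)/(1+ar))], where a = tan(bπ/4). -/

import Mathlib

open Complex Set

/-- The strip `S = {z : -1 < Re z < 1}`. -/
def stripS : Set ℂ := {z : ℂ | -1 < z.re ∧ z.re < 1}

/-- The unit disc. -/
def discU : Set ℂ := {z : ℂ | ‖z‖ < 1}

/-- Hyperbolic density of the strip. -/
noncomputable def rhoS (z : ℂ) : ℝ := (Real.pi / 2) / Real.cos (Real.pi / 2 * z.re)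

/-- Hyperbolic density of the unit disc. -/
noncomputable def rhoU (z : ℂ) : ℝ := 2 / (1 - ‖z‖ ^ 2)

/-- Hyperbolic length of a curve in the strip. -/
noncomputable def hypLenS (γ : ℝ → ℂ) : ℝ := ∫ t in (0:ℝ)..1, rhoS (γ t) * ‖deriv γ t‖

/-- Hyperbolic length of a curve in the disc. -/
noncomputable def hypLenU (γ : ℝ → ℂ) : ℝ := ∫ t in (0:ℝ)..1, rhoU (γ t) * ‖deriv γ t‖

/-- Hyperbolic distance on the strip: infimum of hyperbolic lengths of C¹ curves. -/
noncomputable def dS (z₁ z₂ : ℂ) : ℝ :=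
  sInf { L : ℝ | ∃ γ : ℝ → ℂ, ContDiffOn ℝ 1 γ (Icc 0 1) ∧ γ 0 = z₁ ∧ γ 1 = z₂ ∧
    (∀ t ∈ Icc (0:ℝ) 1, γ t ∈ stripS) ∧ L = hypLenS γ }

/-- Hyperbolic distance on the unit disc. -/
noncomputable def dU (z₁ z₂ : ℂ) : ℝ :=
  sInf { L : ℝ | ∃ γ : ℝ → ℂ, ContDiffOn ℝ 1 γ (Icc 0 1) ∧ γ 0 = z₁ ∧ γ 1 = z₂ ∧
    (∀ t ∈ Icc (0:ℝ) 1, γ t ∈ discU) ∧ L = hypLenU γ }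

/-- The conformal map of the disc onto the strip, inverse of `z ↦ tan (π z / 4)`. -/
noncomputable def phiUS (z : ℂ) : ℂ :=
  (-(2 * Complex.I) / (Real.pi : ℂ)) * Complex.log ((1 + Complex.I * z) / (1 - Complex.I * z))

/-- Inverse hyperbolic tangent. -/
noncomputable def artanh (r : ℝ) : ℝ := Real.log ((1 + r) / (1 - r)) / 2

/-- A real-valued function is harmonic on a set. -/
def HarmonicOnR (u : ℂ → ℝ) (s : Set ℂ) : Prop :=
  ContDiffOn ℝ 2 u s ∧ ∀ z ∈ s,
    fderiv ℝ (fun w => fderiv ℝ u w 1) z 1 + fderiv ℝ (fun w => fderiv ℝ u w Complex.I) z Complex.I = 0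

/-- A complex-valued function is harmonic on a set. -/
def HarmonicOnC (f : ℂ → ℂ) (s : Set ℂ) : Prop :=
  ContDiffOn ℝ 2 f s ∧ ∀ z ∈ s,
    fderiv ℝ (fun w => fderiv ℝ f w 1) z 1 + fderiv ℝ (fun w => fderiv ℝ f w Complex.I) z Complex.I = 0

/-- Wirtinger derivative ∂f/∂z. -/
noncomputable def wderiv (f : ℂ → ℂ) (z : ℂ) : ℂ :=
  (fderiv ℝ f z 1 - Complex.I * fderiv ℝ f z Complex.I) / 2

/-- Wirtinger derivative ∂f/∂z̄. -/
noncomputable def wderivBar (f : ℂ → ℂ) (z : ℂ) : ℂ :=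
  (fderiv ℝ f z 1 + Complex.I * fderiv ℝ f z Complex.I) / 2

/-- Sense-preserving K-quasiregular C¹ map on a set. -/
def QRegOn (K : ℝ) (f : ℂ → ℂ) (s : Set ℂ) : Prop :=
  ContDiffOn ℝ 1 f s ∧ ∀ z ∈ s,
    ‖wderivBar f z‖ < ‖wderiv f z‖ ∧
    ‖wderiv f z‖ + ‖wderivBar f z‖
      ≤ K * (‖wderiv f z‖ - ‖wderivBar f z‖)

/-! `Λ x = 2 artanh (tan (π x / 4))` (`rhoSPrimitive`) is a primitive of the strip density
along `(-1, 1)`, and `ρ_S z` depends only on `Re z`. Along any path `γ` in the strip,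
`Λ (Re γ 1) - Λ (Re γ 0) = ∫ ρ_S(γ) Re γ' ≤ ∫ ρ_S(γ) |γ'|`, with equality for real segments,
so `Re` maps the closed disc of radius `R` about `b` onto `{x | |Λ b - Λ x| ≤ R}`, an interval
since `Λ` is increasing. As `λ(r) = 2 artanh r`, the addition formula for `artanh` places its
endpoints where `tan (π x / 4) = (a ± r) / (1 ± a r)`. -/

lemma hasDerivAt_artanh {x : ℝ} (hx : x ∈ Ioo (-1 : ℝ) 1) :
    HasDerivAt artanh (1 / (1 - x ^ 2)) x := by
  obtain ⟨hx₁, hx₂⟩ := hx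
  have h₁ : (1 : ℝ) - x ≠ 0 := by linarith
  have h₂ : (1 : ℝ) + x ≠ 0 := by linarith
  have h₃ : (1 : ℝ) - x ^ 2 ≠ 0 := by nlinarith
  have hquot : HasDerivAt (fun y : ℝ => (1 + y) / (1 - y)) (2 / (1 - x) ^ 2) x :=
    (((hasDerivAt_id' x).const_add 1).div ((hasDerivAt_id' x).const_sub 1) h₁).congr_deriv
      (by ring)
  exact ((hquot.log (div_ne_zero h₂ h₁)).div_const 2).congr_deriv (by field_simp; ring)

lemma artanh_add {u v : ℝ} (hu : u ∈ Ioo (-1 : ℝ) 1) (hv : v ∈ Ioo (-1 : ℝ) 1) :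
    artanh u + artanh v = artanh ((u + v) / (1 + u * v)) := by
  obtain ⟨hu₁, hu₂⟩ := hu
  obtain ⟨hv₁, hv₂⟩ := hv
  have huv : 0 < 1 + u * v := by nlinarith
  have hquot : (1 + (u + v) / (1 + u * v)) / (1 - (u + v) / (1 + u * v))
      = (1 + u) / (1 - u) * ((1 + v) / (1 - v)) := by
    rw [one_add_div huv.ne', one_sub_div huv.ne', div_div_div_cancel_right₀ huv.ne',
      div_mul_div_comm]
    congr 1 <;> ring
  unfold artanh
  rw [hquot, Real.log_mul (div_pos (by linarith) (by linarith)).ne'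
    (div_pos (by linarith) (by linarith)).ne']
  ring

lemma artanh_neg (x : ℝ) : artanh (-x) = -artanh x := by
  rw [artanh, artanh, sub_neg_eq_add, ← neg_div, ← Real.log_inv, inv_div, ← sub_eq_add_neg,
    add_comm]

lemma add_div_one_add_mul_mem_Ioo {u v : ℝ} (hu : u ∈ Ioo (-1 : ℝ) 1)
    (hv : v ∈ Ioo (-1 : ℝ) 1) :
    (u + v) / (1 + u * v) ∈ Ioo (-1 : ℝ) 1 := by
  obtain ⟨hu₁, hu₂⟩ := hu
  obtain ⟨hv₁, hv₂⟩ := hv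
  have huv : 0 < 1 + u * v := by nlinarith
  rw [mem_Ioo, lt_div_iff₀ huv, div_lt_one huv]
  constructor <;> nlinarith

lemma tan_mul_pi_div_four_mem_Ioo {x : ℝ} (hx : x ∈ Ioo (-1 : ℝ) 1) :
    Real.tan (x * Real.pi / 4) ∈ Ioo (-1 : ℝ) 1 := by
  have hπ := Real.pi_pos
  obtain ⟨hx₁, hx₂⟩ := hx
  have hmem : ∀ y ∈ Icc (-1 : ℝ) 1, y * Real.pi / 4 ∈ Ioo (-(Real.pi / 2)) (Real.pi / 2) :=
    fun y ⟨hy₁, hy₂⟩ => ⟨by nlinarith, by nlinarith⟩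
  have hx : x * Real.pi / 4 ∈ Ioo (-(Real.pi / 2)) (Real.pi / 2) := hmem x ⟨hx₁.le, hx₂.le⟩
  constructor
  · have := Real.strictMonoOn_tan (hmem (-1) (by norm_num)) hx (by nlinarith)
    rwa [neg_one_mul, neg_div, Real.tan_neg, Real.tan_pi_div_four] at this
  · have := Real.strictMonoOn_tan hx (hmem 1 (by norm_num)) (by nlinarith)
    rwa [one_mul, Real.tan_pi_div_four] at this

lemma four_div_pi_mul_arctan_mem_Ioo {y : ℝ} (hy : y ∈ Ioo (-1 : ℝ) 1) :
    4 / Real.pi * Real.arctan y ∈ Ioo (-1 : ℝ) 1 := by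
  have hπ := Real.pi_pos
  have h₁ : -(Real.pi / 4) < Real.arctan y := by
    simpa [Real.arctan_neg, Real.arctan_one] using Real.arctan_strictMono hy.1
  have h₂ : Real.arctan y < Real.pi / 4 := by
    simpa [Real.arctan_one] using Real.arctan_strictMono hy.2
  rw [mem_Ioo, div_mul_eq_mul_div, lt_div_iff₀ hπ, div_lt_one hπ]
  constructor <;> linarith

lemma cos_pi_div_two_mul_re_pos {z : ℂ} (hz : z ∈ stripS) :
    0 < Real.cos (Real.pi / 2 * z.re) := by
  have hπ := Real.pi_pos
  obtain ⟨hz₁, hz₂⟩ := hz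
  exact Real.cos_pos_of_mem_Ioo ⟨by nlinarith, by nlinarith⟩

lemma rhoS_pos {z : ℂ} (hz : z ∈ stripS) : 0 < rhoS z :=
  div_pos (by positivity) (cos_pi_div_two_mul_re_pos hz)

lemma continuousOn_rhoS : ContinuousOn rhoS stripS :=
  continuousOn_const.div (by fun_prop) fun _ hz => (cos_pi_div_two_mul_re_pos hz).ne'

noncomputable def rhoSPrimitive (x : ℝ) : ℝ := 2 * artanh (Real.tan (x * Real.pi / 4))

lemma one_sub_tan_sq_mul_cos_sq {θ : ℝ} (hθ : Real.cos θ ≠ 0) :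
    (1 - Real.tan θ ^ 2) * Real.cos θ ^ 2 = Real.cos (2 * θ) := by
  rw [Real.tan_eq_sin_div_cos, Real.cos_two_mul']
  field_simp

lemma hasDerivAt_rhoSPrimitive {z : ℂ} (hz : z ∈ stripS) :
    HasDerivAt rhoSPrimitive (rhoS z) z.re := by
  have hπ := Real.pi_pos
  have hcos : Real.cos (z.re * Real.pi / 4) ≠ 0 :=
    (Real.cos_pos_of_mem_Ioo ⟨by nlinarith [hz.1], by nlinarith [hz.2]⟩).ne'
  have htan : HasDerivAt (fun x : ℝ => Real.tan (x * Real.pi / 4))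
      (1 / Real.cos (z.re * Real.pi / 4) ^ 2 * (Real.pi / 4)) z.re :=
    (Real.hasDerivAt_tan hcos).comp (h₂ := Real.tan) z.re
      ((hasDerivAt_mul_const Real.pi).div_const 4)
  have htan_sq : 1 - Real.tan (z.re * Real.pi / 4) ^ 2 ≠ 0 := by
    have := tan_mul_pi_div_four_mem_Ioo hz
    nlinarith [this.1, this.2]
  refine (((hasDerivAt_artanh (tan_mul_pi_div_four_mem_Ioo hz)).comp z.re htan).const_mul
    2).congr_deriv ?_
  rw [rhoS, show Real.pi / 2 * z.re = 2 * (z.re * Real.pi / 4) by ring,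
    ← one_sub_tan_sq_mul_cos_sq hcos]
  field_simp
  ring

lemma rhoSPrimitive_strictMonoOn : StrictMonoOn rhoSPrimitive (Ioo (-1 : ℝ) 1) :=
  strictMonoOn_of_deriv_pos (convex_Ioo _ _)
    (fun x hx => (hasDerivAt_rhoSPrimitive (z := x) hx).continuousAt.continuousWithinAt)
    fun x hx => by
      rw [interior_Ioo] at hx
      exact (hasDerivAt_rhoSPrimitive (z := x) hx).deriv ▸ rhoS_pos (z := x) hx

lemma continuousOn_rhoSPrimitive_re : ContinuousOn (fun z : ℂ => rhoSPrimitive z.re) stripS :=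
  fun _ hz => (hasDerivAt_rhoSPrimitive hz).continuousAt.comp_continuousWithinAt
    continuous_re.continuousWithinAt

lemma rhoSPrimitive_four_div_pi_mul_arctan (y : ℝ) :
    rhoSPrimitive (4 / Real.pi * Real.arctan y) = 2 * artanh y := by
  rw [rhoSPrimitive, show 4 / Real.pi * Real.arctan y * Real.pi / 4 = Real.arctan y by
    field_simp, Real.tan_arctan]

def stripPaths (z w : ℂ) : Set (ℝ → ℂ) :=
  {γ | ContDiffOn ℝ 1 γ (Icc 0 1) ∧ γ 0 = z ∧ γ 1 = w ∧ ∀ t ∈ Icc (0 : ℝ) 1, γ t ∈ stripS}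

lemma dS_eq_sInf_image (z w : ℂ) : dS z w = sInf (hypLenS '' stripPaths z w) := by
  rw [dS]
  congr 1
  ext L
  exact ⟨fun ⟨γ, h₁, h₂, h₃, h₄, h₅⟩ => ⟨γ, ⟨h₁, h₂, h₃, h₄⟩, h₅.symm⟩,
    fun ⟨γ, ⟨h₁, h₂, h₃, h₄⟩, h₅⟩ => ⟨γ, h₁, h₂, h₃, h₄, h₅.symm⟩⟩

lemma convex_stripS : Convex ℝ stripS :=
  (convex_halfSpace_re_gt (-1)).inter (convex_halfSpace_re_lt 1)

lemma segment_mem_stripPaths {z w : ℂ} (hz : z ∈ stripS) (hw : w ∈ stripS) :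
    (fun t : ℝ => z + t • (w - z)) ∈ stripPaths z w :=
  ⟨by fun_prop, by simp, by simp, fun _ ht => convex_stripS.add_smul_sub_mem hz hw ht⟩

lemma hypLenS_eq_integral_derivWithin (γ : ℝ → ℂ) :
    hypLenS γ = ∫ t in (0 : ℝ)..1, rhoS (γ t) * ‖derivWithin γ (Icc 0 1) t‖ :=
  intervalIntegral.integral_congr_Ioo_of_le zero_le_one fun t ht => by
    rw [derivWithin_of_mem_nhds (Icc_mem_nhds ht.1 ht.2)]

section stripPaths

variable {γ : ℝ → ℂ} {z w : ℂ}

lemma hypLenS_nonneg (hγ : γ ∈ stripPaths z w) : 0 ≤ hypLenS γ :=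
  intervalIntegral.integral_nonneg zero_le_one fun t ht =>
    mul_nonneg (rhoS_pos (hγ.2.2.2 t ht)).le (norm_nonneg _)

lemma continuousOn_rhoS_comp (hγ : γ ∈ stripPaths z w) :
    ContinuousOn (fun t => rhoS (γ t)) (Icc 0 1) :=
  continuousOn_rhoS.comp hγ.1.continuousOn hγ.2.2.2

lemma continuousOn_derivWithin_stripPath (hγ : γ ∈ stripPaths z w) :
    ContinuousOn (derivWithin γ (Icc 0 1)) (Icc 0 1) :=
  hγ.1.continuousOn_derivWithin uniqueDiffOn_Icc_zero_one le_rfl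

lemma rhoSPrimitive_sub_eq_integral (hγ : γ ∈ stripPaths z w) :
    rhoSPrimitive w.re - rhoSPrimitive z.re
      = ∫ t in (0 : ℝ)..1, rhoS (γ t) * (derivWithin γ (Icc 0 1) t).re := by
  have hint := ((continuousOn_rhoS_comp hγ).mul (continuous_re.comp_continuousOn
    (continuousOn_derivWithin_stripPath hγ))).intervalIntegrable_of_Icc
    (μ := MeasureTheory.volume) zero_le_one
  obtain ⟨hC, rfl, rfl, hS⟩ := hγ
  have hcont : ContinuousOn (fun t => rhoSPrimitive (γ t).re) (Icc 0 1) :=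
    continuousOn_rhoSPrimitive_re.comp hC.continuousOn hS
  have hderiv : ∀ t ∈ Ioo (0 : ℝ) 1, HasDerivAt (fun t => rhoSPrimitive (γ t).re)
      (rhoS (γ t) * (derivWithin γ (Icc 0 1) t).re) t := by
    intro t ht
    have hγt : HasDerivAt γ (derivWithin γ (Icc 0 1) t) t :=
      (hC.differentiableOn one_ne_zero t (Ioo_subset_Icc_self ht)).hasDerivWithinAt.hasDerivAt
        (Icc_mem_nhds ht.1 ht.2)
    have hre : HasDerivAt (fun s => (γ s).re) (derivWithin γ (Icc 0 1) t).re t :=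
      reCLM.hasFDerivAt.comp_hasDerivAt t hγt
    exact (hasDerivAt_rhoSPrimitive (hS t (Ioo_subset_Icc_self ht))).comp
      (h₂ := rhoSPrimitive) t hre
  exact (intervalIntegral.integral_eq_sub_of_hasDerivAt_of_le zero_le_one hcont hderiv hint).symm

lemma abs_rhoSPrimitive_sub_le_hypLenS (hγ : γ ∈ stripPaths z w) :
    |rhoSPrimitive w.re - rhoSPrimitive z.re| ≤ hypLenS γ := by
  rw [rhoSPrimitive_sub_eq_integral hγ, hypLenS_eq_integral_derivWithin, ← Real.norm_eq_abs]
  refine intervalIntegral.norm_integral_le_of_norm_le zero_le_one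
    (MeasureTheory.ae_of_all _ fun t ht => ?_)
    (((continuousOn_rhoS_comp hγ).mul
      (continuousOn_derivWithin_stripPath hγ).norm).intervalIntegrable_of_Icc
    (μ := MeasureTheory.volume) zero_le_one)
  have hρ := rhoS_pos (hγ.2.2.2 t (Ioc_subset_Icc_self ht))
  rw [Real.norm_eq_abs, abs_mul, abs_of_pos hρ]
  exact mul_le_mul_of_nonneg_left (abs_re_le_norm _) hρ.le

end stripPaths

lemma hypLenS_segment_ofReal {x y : ℝ} (hx : x ∈ Ioo (-1 : ℝ) 1) (hy : y ∈ Ioo (-1 : ℝ) 1) :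
    hypLenS (fun t : ℝ => (x : ℂ) + t • ((y : ℂ) - x))
      = |rhoSPrimitive y - rhoSPrimitive x| := by
  set γ := fun t : ℝ => (x : ℂ) + t • ((y : ℂ) - x)
  have hγ : γ ∈ stripPaths x y := segment_mem_stripPaths (z := x) (w := y) hx hy
  have hderiv : ∀ t ∈ uIcc (0 : ℝ) 1, derivWithin γ (Icc 0 1) t = ((y - x : ℝ) : ℂ) := by
    intro t ht
    rw [uIcc_of_le zero_le_one] at ht
    rw [((((hasDerivAt_id' t).smul_const ((y : ℂ) - x)).const_add (x : ℂ)).hasDerivWithinAt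
      ).derivWithin (uniqueDiffOn_Icc_zero_one t ht)]
    push_cast
    exact one_smul _ _
  have hlen : hypLenS γ = |y - x| * ∫ t in (0 : ℝ)..1, rhoS (γ t) := by
    rw [hypLenS_eq_integral_derivWithin, ← intervalIntegral.integral_const_mul]
    refine intervalIntegral.integral_congr fun t ht => ?_
    rw [hderiv t ht, norm_real, Real.norm_eq_abs, mul_comm]
  have hsub : rhoSPrimitive y - rhoSPrimitive x = (y - x) * ∫ t in (0 : ℝ)..1, rhoS (γ t) := by
    rw [← intervalIntegral.integral_const_mul]
    refine (rhoSPrimitive_sub_eq_integral hγ).trans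
      (intervalIntegral.integral_congr fun t ht => ?_)
    rw [hderiv t ht, ofReal_re, mul_comm]
  have hρ : 0 ≤ ∫ t in (0 : ℝ)..1, rhoS (γ t) :=
    intervalIntegral.integral_nonneg zero_le_one fun t ht => (rhoS_pos (hγ.2.2.2 t ht)).le
  rw [hlen, hsub, abs_mul, abs_of_nonneg hρ]

lemma abs_rhoSPrimitive_sub_le_dS {z w : ℂ} (hz : z ∈ stripS) (hw : w ∈ stripS) :
    |rhoSPrimitive w.re - rhoSPrimitive z.re| ≤ dS z w := by
  rw [dS_eq_sInf_image]
  exact le_csInf ((nonempty_of_mem (segment_mem_stripPaths hz hw)).image _)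
    (forall_mem_image.2 fun _ hγ => abs_rhoSPrimitive_sub_le_hypLenS hγ)

lemma dS_ofReal {x y : ℝ} (hx : x ∈ Ioo (-1 : ℝ) 1) (hy : y ∈ Ioo (-1 : ℝ) 1) :
    dS x y = |rhoSPrimitive y - rhoSPrimitive x| := by
  refine le_antisymm ?_ (abs_rhoSPrimitive_sub_le_dS (z := x) (w := y) hx hy)
  rw [dS_eq_sInf_image, ← hypLenS_segment_ofReal hx hy]
  exact csInf_le ⟨0, forall_mem_image.2 fun _ hγ => hypLenS_nonneg hγ⟩
    (mem_image_of_mem _ (segment_mem_stripPaths (z := x) (w := y) hx hy))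

lemma re_image_setOf_dS_le {b : ℝ} (hb : b ∈ Ioo (-1 : ℝ) 1) (R : ℝ) :
    re '' {z : ℂ | z ∈ stripS ∧ dS z b ≤ R}
      = {x : ℝ | x ∈ Ioo (-1 : ℝ) 1 ∧ |rhoSPrimitive b - rhoSPrimitive x| ≤ R} := by
  ext x
  constructor
  · rintro ⟨z, ⟨hz, hR⟩, rfl⟩
    exact ⟨hz, (abs_rhoSPrimitive_sub_le_dS (w := b) hz hb).trans hR⟩
  · rintro ⟨hx, hR⟩
    exact ⟨x, ⟨hx, (dS_ofReal hx hb).trans_le hR⟩, ofReal_re x⟩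

lemma StrictMonoOn.inter_preimage_Icc {α β : Type*} [LinearOrder α] [Preorder β]
    {f : α → β} {s : Set α} (hf : StrictMonoOn f s) (hs : s.OrdConnected) {a b : α}
    (ha : a ∈ s) (hb : b ∈ s) : s ∩ f ⁻¹' Icc (f a) (f b) = Icc a b := by
  ext x
  constructor
  · rintro ⟨hx, hax, hxb⟩
    exact ⟨(hf.le_iff_le ha hx).1 hax, (hf.le_iff_le hx hb).1 hxb⟩
  · intro hx
    have hxs := hs.out ha hb hx
    exact ⟨hxs, (hf.le_iff_le ha hxs).2 hx.1, (hf.le_iff_le hxs hb).2 hx.2⟩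

/-- the image under `Re` of the closed hyperbolic disc in the strip with
hyperbolic center `b ∈ (-1,1)` and radius `λ(r)` is
`[(4/π)arctan((a-r)/(1-ar)), (4/π)arctan((a+r)/(1+ar))]`, `a = tan(bπ/4)`. -/
theorem re_image_hyperbolic_disc_general (b r : ℝ) (hb : b ∈ Set.Ioo (-1:ℝ) 1)
    (hr : r ∈ Set.Ioo (0:ℝ) 1) :
    Complex.re '' {z : ℂ | z ∈ stripS ∧ dS z (b : ℂ) ≤ Real.log ((1 + r) / (1 - r))}
      = Set.Icc
          ((4 / Real.pi) * Real.arctan ((Real.tan (b * Real.pi / 4) - r) /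
            (1 - Real.tan (b * Real.pi / 4) * r)))
          ((4 / Real.pi) * Real.arctan ((Real.tan (b * Real.pi / 4) + r) /
            (1 + Real.tan (b * Real.pi / 4) * r))) := by
  set a := Real.tan (b * Real.pi / 4)
  have ha : a ∈ Ioo (-1 : ℝ) 1 := tan_mul_pi_div_four_mem_Ioo hb
  have hr_mem : r ∈ Ioo (-1 : ℝ) 1 := ⟨by linarith [hr.1], hr.2⟩
  have hnegr_mem : -r ∈ Ioo (-1 : ℝ) 1 := ⟨by linarith [hr.2], by linarith [hr.1]⟩
  have hsub : (a - r) / (1 - a * r) = (a + -r) / (1 + a * -r) := by ring_nf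
  have hradius : Real.log ((1 + r) / (1 - r)) = 2 * artanh r := by rw [artanh]; ring
  have hlower : rhoSPrimitive (4 / Real.pi * Real.arctan ((a - r) / (1 - a * r)))
      = rhoSPrimitive b - Real.log ((1 + r) / (1 - r)) := by
    rw [rhoSPrimitive_four_div_pi_mul_arctan, hsub, ← artanh_add ha hnegr_mem, artanh_neg,
      hradius, rhoSPrimitive]
    ring
  have hupper : rhoSPrimitive (4 / Real.pi * Real.arctan ((a + r) / (1 + a * r)))
      = rhoSPrimitive b + Real.log ((1 + r) / (1 - r)) := by
    rw [rhoSPrimitive_four_div_pi_mul_arctan, ← artanh_add ha hr_mem, hradius, rhoSPrimitive]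
    ring
  rw [re_image_setOf_dS_le hb]
  simp_rw [mem_Icc_iff_abs_le, ← hlower, ← hupper]
  exact rhoSPrimitive_strictMonoOn.inter_preimage_Icc ordConnected_Ioo
    (four_div_pi_mul_arctan_mem_Ioo (hsub ▸ add_div_one_add_mul_mem_Ioo ha hnegr_mem))
    (four_div_pi_mul_arctan_mem_Ioo (add_div_one_add_mul_mem_Ioo ha hr_mem))
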